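/- Let E be a finite effect algebra with pairwise distinct atoms a_1,…,a_m. Then for every x ∈ E there exist natural numbers k_1,…,k_m such that the orthosum k_1 a_1 ⊕ … ⊕ k_m a_m is defined and equals x. -/

import Mathlib

/-- An effect algebra: a set with 0, 1 and a partially defined binary
operation `⊕`, modeled as an `Option`-valued operation. -/
structure EffectAlgebra (E : Type*) where
  oplus : E → E → Option E
  zero : E
  one : E
  comm : ∀ p q, oplus p q = oplus q p
  assoc : ∀ p q r s qr, oplus q r = some qr → oplus p qr = some s →
    ∃ pq, oplus p q = some pq ∧ oplus pq r = some s
  orthosupp : ∀ p, ∃! q, oplus p q = some one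
  zero_unit : ∀ p q, oplus one p = some q → p = zero

namespace EffectAlgebra

variable {E : Type*}

/-- `p ≤ q` iff there is `r` with `p ⊕ r` defined and equal to `q`. -/
def le (W : EffectAlgebra E) (p q : E) : Prop := ∃ r, W.oplus p r = some q

/-- An atom is a minimal element of `E \ {0}`. -/
def IsAtomElem (W : EffectAlgebra E) (x : E) : Prop :=
  x ≠ W.zero ∧ ∀ y : E, W.le y x → y ≠ W.zero → y = x

/-- Partial orthosum of a list of elements. -/
def listSum (W : EffectAlgebra E) : List E → Option E
  | [] => some W.zero
  | x :: xs => (listSum W xs).bind (fun y => W.oplus x y)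

/-- The orthosum `k 0 • a 0 ⊕ ⋯ ⊕ k (m-1) • a (m-1)`, when defined. -/
def mulSum (W : EffectAlgebra E) {m : ℕ} (a : Fin m → E) (k : Fin m → ℕ) : Option E :=
  W.listSum ((List.ofFn (fun t => List.replicate (k t) (a t))).flatten)

/-- `Seq(E)`: tuples `k` with `⨁ k t • a t` defined and equal to `1`. -/
def SeqSet (W : EffectAlgebra E) {m : ℕ} (a : Fin m → E) : Set (Fin m → ℕ) :=
  {k | W.mulSum a k = some W.one}

/-- `a : Fin m → E` enumerates the atoms of `E` without repetition. -/
def AtomFamily (W : EffectAlgebra E) {m : ℕ} (a : Fin m → E) : Prop :=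
  Function.Injective a ∧ (∀ t, W.IsAtomElem (a t)) ∧
    ∀ x : E, W.IsAtomElem x → ∃ t, x = a t

/-- `A ∈ M(E)`: the rows of `A` are pairwise distinct and enumerate `Seq(E)`. -/
def MemM (W : EffectAlgebra E) {m n : ℕ} (a : Fin m → E) (A : Matrix (Fin n) (Fin m) ℕ) : Prop :=
  (∀ i j : Fin n, i ≠ j → ∃ t, A i t ≠ A j t) ∧
    {k : Fin m → ℕ | ∃ i, A i = k} = W.SeqSet a

/-- A state on an effect algebra. -/
def IsState (W : EffectAlgebra E) (s : E → ℝ) : Prop :=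
  (∀ x, 0 ≤ s x ∧ s x ≤ 1) ∧ s W.one = 1 ∧
    ∀ p q r, W.oplus p q = some r → s p + s q ≤ 1 ∧ s r = s p + s q

end EffectAlgebra

/-- `(A|1)`: the matrix `A` augmented by a column of ones. -/
def augmentOnes {n m : ℕ} {R : Type*} [One R] (A : Matrix (Fin n) (Fin m) R) :
    Matrix (Fin n) (Fin (m + 1)) R :=
  Matrix.of fun i j => if h : (j : ℕ) < m then A i ⟨j, h⟩ else 1

/-!
Induct along the strict order `p < q ↔ p ≤ q ∧ p ≠ q` of `E`, which is well founded because
`E` is finite. A nonzero `x` lies above a minimal nonzero element, i.e. an atom `a t`, so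
`x = a t ⊕ r` with `r < x`. If `k` decomposes `r`, then `k + Pi.single t 1` decomposes `x`:
by commutativity and associativity the partial orthosum of a list depends only on the multiset
of its entries.
-/

theorem Multiset.coe_flatten_ofFn {α : Type*} {m : ℕ} (f : Fin m → List α) :
    ((List.ofFn f).flatten : Multiset α) = ∑ i, (f i : Multiset α) := by
  rw [← Multiset.coe_join, Multiset.join, Multiset.sum_coe, List.map_ofFn, List.sum_ofFn]
  rfl

namespace EffectAlgebra

variable {E : Type*} (W : EffectAlgebra E)

theorem oplus_left_comm {p q r qr s : E} (hqr : W.oplus q r = some qr)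
    (h : W.oplus p qr = some s) : ∃ pr, W.oplus p r = some pr ∧ W.oplus q pr = some s := by
  obtain ⟨pr, hpr, hs⟩ := W.assoc p r q s qr (by rwa [W.comm]) h
  exact ⟨pr, hpr, by rwa [W.comm]⟩

theorem oplus_eq_one_unique {p q q' : E} (h : W.oplus p q = some W.one)
    (h' : W.oplus p q' = some W.one) : q = q' :=
  (W.orthosupp p).unique h h'

theorem one_oplus_zero : W.oplus W.one W.zero = some W.one := by
  obtain ⟨q, hq, -⟩ := W.orthosupp W.one
  rwa [W.zero_unit q W.one hq] at hq

theorem oplus_zero (p : E) : W.oplus p W.zero = some p := by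
  obtain ⟨q, hpq, -⟩ := W.orthosupp p
  have hqp : W.oplus q p = some W.one := by rw [W.comm]; exact hpq
  obtain ⟨p', hp', hqp'⟩ := W.oplus_left_comm (p := W.zero) hqp
    (by rw [W.comm]; exact W.one_oplus_zero)
  rw [W.oplus_eq_one_unique hqp' hqp] at hp'
  rwa [W.comm]

theorem eq_zero_of_oplus_eq_right {p q : E} (h : W.oplus p q = some q) : p = W.zero := by
  obtain ⟨q', hqq', -⟩ := W.orthosupp q
  have hq'q : W.oplus q' q = some W.one := by rw [W.comm]; exact hqq'
  obtain ⟨s, hs, hps⟩ := W.oplus_left_comm h hq'q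
  have : s = W.one := Option.some_injective _ (hs.symm.trans hq'q)
  rw [this, W.comm] at hps
  exact W.zero_unit p W.one hps

theorem eq_zero_of_oplus_eq_zero {p q : E} (h : W.oplus p q = some W.zero) : p = W.zero := by
  obtain ⟨s, hs, -⟩ := W.oplus_left_comm h (p := W.one) W.one_oplus_zero
  have hq : q = W.zero := W.zero_unit q s hs
  rw [hq, W.oplus_zero] at h
  exact Option.some_injective _ h

theorem le_refl (p : E) : W.le p p := ⟨W.zero, W.oplus_zero p⟩

theorem le_trans {p q r : E} : W.le p q → W.le q r → W.le p r := by
  rintro ⟨u, hu⟩ ⟨v, hv⟩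
  obtain ⟨w, -, hw⟩ := W.oplus_left_comm hu (by rw [W.comm]; exact hv)
  exact ⟨w, hw⟩

theorem le_antisymm {p q : E} : W.le p q → W.le q p → p = q := by
  rintro ⟨u, hu⟩ ⟨v, hv⟩
  obtain ⟨w, hvu, hpw⟩ := W.oplus_left_comm hu (by rw [W.comm]; exact hv)
  have hw : w = W.zero := W.eq_zero_of_oplus_eq_right (by rw [W.comm]; exact hpw)
  have hv0 : v = W.zero := W.eq_zero_of_oplus_eq_zero (hw ▸ hvu)
  rw [hv0, W.oplus_zero] at hv
  exact (Option.some_injective _ hv).symm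

abbrev toPartialOrder : PartialOrder E where
  le := W.le
  le_refl := W.le_refl
  le_trans _ _ _ := W.le_trans
  le_antisymm _ _ := W.le_antisymm

theorem wellFounded_lt [Finite E] : WellFounded fun p q => W.le p q ∧ p ≠ q := by
  let := W.toPartialOrder
  convert (_root_.wellFounded_lt : WellFounded (· < · : E → E → Prop)) using 3
  exact (lt_iff_le_and_ne (α := E)).symm

theorem exists_atom_le [Finite E] {x : E} (hx : x ≠ W.zero) :
    ∃ p, W.IsAtomElem p ∧ W.le p x := by
  obtain ⟨p, ⟨hpx, hp⟩, hmin⟩ :=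
    W.wellFounded_lt.has_min {y | W.le y x ∧ y ≠ W.zero} ⟨x, W.le_refl x, hx⟩
  refine ⟨p, ⟨hp, fun y hyp hy => ?_⟩, hpx⟩
  by_contra hne
  exact hmin y ⟨W.le_trans hyp hpx, hy⟩ ⟨hyp, hne⟩

theorem bind_oplus_comm (x y s : E) :
    (W.oplus x s).bind (W.oplus y) = (W.oplus y s).bind (W.oplus x) := by
  have key : ∀ x y z, (W.oplus x s).bind (W.oplus y) = some z →
      (W.oplus y s).bind (W.oplus x) = some z := by
    intro x y z h
    obtain ⟨xs, hxs, hz⟩ := Option.bind_eq_some_iff.mp h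
    obtain ⟨ys, hys, hz'⟩ := W.oplus_left_comm hxs hz
    exact Option.bind_eq_some_iff.mpr ⟨ys, hys, hz'⟩
  exact Option.ext fun z => ⟨key x y z, key y x z⟩

theorem listSum_perm {l₁ l₂ : List E} (h : l₁.Perm l₂) : W.listSum l₁ = W.listSum l₂ := by
  induction h with
  | nil => rfl
  | cons x _ ih => simp only [listSum, ih]
  | swap x y l =>
    show ((W.listSum l).bind _).bind _ = ((W.listSum l).bind _).bind _
    cases W.listSum l with
    | none => rfl
    | some s => exact W.bind_oplus_comm x y s
  | trans _ _ ih₁ ih₂ => exact ih₁.trans ih₂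

theorem mulSum_zero {m : ℕ} (a : Fin m → E) : W.mulSum a 0 = some W.zero := by
  simp [mulSum, listSum]

theorem mulSum_add_single {m : ℕ} (a : Fin m → E) (k : Fin m → ℕ) (t : Fin m) :
    W.mulSum a (k + Pi.single t 1) = (W.mulSum a k).bind (W.oplus (a t)) := by
  refine W.listSum_perm (l₂ := a t :: _) ?_
  rw [← Multiset.coe_eq_coe, ← Multiset.cons_coe, Multiset.coe_flatten_ofFn,
    Multiset.coe_flatten_ofFn]
  simp only [Pi.add_apply, Multiset.coe_replicate, Multiset.replicate_add, Finset.sum_add_distrib]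
  rw [add_comm, ← Multiset.singleton_add]
  congr 1
  rw [Finset.sum_eq_single t] <;> simp +contextual

end EffectAlgebra

/-- In a finite effect algebra every element is an orthosum of multiples of
the atoms. -/
theorem exists_atom_decomposition {E : Type*} [Fintype E] (W : EffectAlgebra E)
    {m : ℕ} (a : Fin m → E) (ha : W.AtomFamily a) (x : E) :
    ∃ k : Fin m → ℕ, W.mulSum a k = some x := by
  induction x using W.wellFounded_lt.induction with
  | _ x ih =>
    by_cases hx : x = W.zero
    · exact ⟨0, hx ▸ W.mulSum_zero a⟩
    obtain ⟨p, hp, r, hpr⟩ := W.exists_atom_le hx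
    obtain ⟨t, rfl⟩ := ha.2.2 p hp
    have hrx : r ≠ x := fun h => hp.1 (W.eq_zero_of_oplus_eq_right (h ▸ hpr))
    obtain ⟨k, hk⟩ := ih r ⟨⟨a t, by rw [W.comm]; exact hpr⟩, hrx⟩
    exact ⟨k + Pi.single t 1, by rw [W.mulSum_add_single, hk]; exact hpr⟩
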